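/- arXiv:1509.06505 — 2 statements merged into one kernel-verified Lean document; each statement's English description precedes it below -/
import Mathlib

section
/- Let σ be a permutation of {1,...,n} with k cycles, and let M be an n×n Haar-distributed random orthogonal matrix with a, b fixed indices. Writing X_n = √n Σ_i M_{a,i} M_{b,σ(i)} and Y_n = √n (M C_n Mᵀ)_{ab} where C_n is an n-cycle with a compatible labeling, then E[(X_n − Y_n)²] ≤ 4k²·C/n for some absolute constant C and all sufficiently large n. -/
open MeasureTheory Matrix

/-- Matrices are measurable as functions to functions (pi measurable structure). -/
instance matrixMeasurableSpace (n : ℕ) : MeasurableSpace (Matrix (Fin n) (Fin n) ℝ) :=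
  inferInstanceAs (MeasurableSpace ((Fin n) → (Fin n) → ℝ))

/-- `μ` is the Haar probability measure on the orthogonal group `O(n)`, viewed as a
measure on `n × n` real matrices: it is a probability measure concentrated on
orthogonal matrices which is invariant under left and right translation by
orthogonal matrices. -/
structure IsHaarOrthogonal (n : ℕ) (μ : Measure (Matrix (Fin n) (Fin n) ℝ)) : Prop where
  isProb : IsProbabilityMeasure μ
  ae_orth : ∀ᵐ M ∂μ, M * Mᵀ = 1
  left_inv : ∀ V : Matrix (Fin n) (Fin n) ℝ, V * Vᵀ = 1 → μ.map (fun M => V * M) = μ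
  right_inv : ∀ V : Matrix (Fin n) (Fin n) ℝ, V * Vᵀ = 1 → μ.map (fun M => M * V) = μ

/-- The number of cycles of a permutation, counting fixed points as cycles. -/
def cycleCount {n : ℕ} (σ : Equiv.Perm (Fin n)) : ℕ :=
  σ.cycleType.card + (Finset.univ.filter fun x => σ x = x).card

/-!
Write the cycles of `σ` one after another as a single list and close it up into an `n`-cycle
`c`. Then `c` agrees with `σ` except at the last entry of each cycle, so
`X_n - Y_n = √n ∑_{i ∈ S} M_{ai} (M_{b,σ i} - M_{b,c i})` with `|S| ≤ k`, and Cauchy–Schwarz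
bounds `E (X_n - Y_n)²` by `4 n |S|² max E[M_{ai}² M_{bj}²]`.

By AM–GM it suffices to know the fourth moment of an entry, `E M_{ai}⁴ = 3 / (n (n + 2))`.
Right-invariance under the reflections that map a row `(x, y)` in columns `i, j` to
`((3x ∓ 4y)/5, …)` gives `E x⁴ = 3 E x²y²`, column swaps make `E M_{ai}² M_{aj}²` independent of
`j ≠ i`, and `∑_j M_{aj}² = 1` then pins down both moments.
-/

section FormPerm

open Finset

variable {α : Type*} [DecidableEq α]

lemma List.formPerm_append_cons_cons_apply {l₁ l₂ : List α} {x y : α}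
    (h : (l₁ ++ x :: y :: l₂).Nodup) : (l₁ ++ x :: y :: l₂).formPerm x = y := by
  simpa using List.formPerm_apply_lt_getElem _ h l₁.length (by simp)

lemma card_filter_apply_ne_formPerm_flatten_le (f : α → α) (L : List (List α))
    (hnd : L.flatten.Nodup) (hchain : ∀ l ∈ L, l.IsChain fun x y => f x = y) :
    #{x ∈ L.flatten.toFinset | f x ≠ L.flatten.formPerm x} ≤ L.length := by
  calc _ ≤ #(L.filterMap List.getLast?).toFinset := by
        refine card_le_card fun x hx => ?_
        simp only [mem_filter, List.mem_toFinset, List.mem_flatten] at hx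
        obtain ⟨⟨l, hl, hxl⟩, hfx⟩ := hx
        simp only [List.mem_toFinset, List.mem_filterMap]
        refine ⟨l, hl, ?_⟩
        obtain ⟨l₁, l₂, rfl⟩ := List.append_of_mem hxl
        rcases l₂ with _ | ⟨y, l₂⟩
        · simp
        · have hfy : f x = y := (List.isChain_append_cons_cons.1 (hchain _ hl)).2.1
          obtain ⟨L₁, L₂, rfl⟩ := List.append_of_mem hl
          have hsplit : (L₁ ++ (l₁ ++ x :: y :: l₂) :: L₂).flatten =
              (L₁.flatten ++ l₁) ++ x :: y :: (l₂ ++ L₂.flatten) := by simp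
          rw [hsplit] at hnd hfx
          exact absurd (List.formPerm_append_cons_cons_apply hnd) (hfy ▸ hfx).symm
    _ ≤ (L.filterMap List.getLast?).length := List.toFinset_card_le _
    _ ≤ L.length := List.length_filterMap_le _ _

end FormPerm

namespace Equiv.Perm

open _root_.Finset

section OrbitList

variable {α : Type*} (σ : Perm α)

noncomputable def orbitList (x : α) : List α :=
  (List.range (Function.minimalPeriod σ x)).map fun m => σ^[m] x

variable {σ}

lemma nodup_orbitList (x : α) : (σ.orbitList x).Nodup :=
  Cycle.nodup_coe_iff.mp Function.nodup_periodicOrbit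

lemma mem_orbitList [Finite α] {x y : α} : y ∈ σ.orbitList x ↔ σ.SameCycle x y := by
  rw [orbitList, ← Cycle.mem_coe_iff, ← Function.periodicOrbit_def,
    Function.mem_periodicOrbit_iff (σ.injective.mem_periodicPts x)]
  constructor
  · rintro ⟨m, rfl⟩
    exact ⟨m, by rw [zpow_natCast, coe_pow]⟩
  · intro h
    obtain ⟨m, rfl⟩ := h.exists_nat_pow_eq
    exact ⟨m, by rw [coe_pow]⟩

lemma isChain_orbitList (x : α) : (σ.orbitList x).IsChain fun y z => σ y = z := by
  rw [orbitList, List.isChain_map, List.isChain_range]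
  intro m _
  exact (Function.iterate_succ_apply' σ m x).symm

end OrbitList

variable {α : Type*} [Fintype α] (σ : Perm α)

open scoped Classical in
noncomputable def cycleBlocks : List (List α) :=
  (univ : Finset (Quotient (SameCycle.setoid σ))).toList.map fun q => σ.orbitList q.out

lemma mem_flatten_cycleBlocks (x : α) : x ∈ σ.cycleBlocks.flatten := by
  simp only [cycleBlocks, List.mem_flatten, List.mem_map, mem_toList, mem_univ, true_and]
  exact ⟨_, ⟨⟦x⟧, rfl⟩, mem_orbitList.2 (Quotient.mk_out (s := SameCycle.setoid σ) x)⟩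

lemma nodup_flatten_cycleBlocks : σ.cycleBlocks.flatten.Nodup := by
  rw [List.nodup_flatten, cycleBlocks, List.pairwise_map]
  refine ⟨by simp [nodup_orbitList],
    (Finset.nodup_toList _).imp fun {q q'} hqq' y hy hy' => hqq' ?_⟩
  rw [mem_orbitList] at hy hy'
  exact Quotient.out_equiv_out.1 (hy.trans hy'.symm)

lemma length_cycleBlocks_le [DecidableEq α] :
    σ.cycleBlocks.length ≤ σ.cycleType.card + #{x | σ x = x} := by
  classical
  let cycleOrFixedPoint (q : Quotient (SameCycle.setoid σ)) :
      σ.cycleFactorsFinset ⊕ {x // σ x = x} :=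
    if h : σ q.out = q.out then .inr ⟨q.out, h⟩
    else .inl ⟨σ.cycleOf q.out, cycleOf_mem_cycleFactorsFinset_iff.2 (mem_support.2 h)⟩
  have hinj : Function.Injective cycleOrFixedPoint := by
    intro q q' h
    simp only [cycleOrFixedPoint] at h
    split_ifs at h with hq hq' hq' <;> simp at h
    · exact h
    · exact Quotient.out_equiv_out.1 ((sameCycle_iff_cycleOf_eq_of_mem_support
        (mem_support.2 hq) (mem_support.2 hq')).2 h)
  have := Fintype.card_le_of_injective cycleOrFixedPoint hinj
  rw [Fintype.card_sum, Fintype.card_coe, Fintype.card_subtype] at this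
  rw [cycleBlocks, List.length_map, Finset.length_toList, card_univ, cycleType_def,
    Multiset.card_map]
  exact this

theorem exists_cycleType_eq_card_filter_apply_ne_le [DecidableEq α] (hα : 2 ≤ Fintype.card α) :
    ∃ c : Perm α, c.cycleType = {Fintype.card α} ∧
      #{x | σ x ≠ c x} ≤ σ.cycleType.card + #{x | σ x = x} := by
  set L := σ.cycleBlocks.flatten
  have hL : L.toFinset = univ :=
    eq_univ_of_forall fun x => List.mem_toFinset.2 (σ.mem_flatten_cycleBlocks x)
  have hlen : 2 ≤ L.length :=
    hα.trans (by rw [← card_univ, ← hL]; exact List.toFinset_card_le L)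
  refine ⟨L.formPerm, ?_, ?_⟩
  · have hsupp : L.formPerm.support = univ := by
      rw [List.support_formPerm_of_nodup _ σ.nodup_flatten_cycleBlocks, hL]
      intro x hx
      simp [L, hx] at hlen
    rw [(List.isCycle_formPerm σ.nodup_flatten_cycleBlocks hlen).cycleType, hsupp, card_univ]
  · calc _ = #{x ∈ L.toFinset | σ x ≠ L.formPerm x} := by rw [hL]
      _ ≤ σ.cycleBlocks.length :=
        card_filter_apply_ne_formPerm_flatten_le σ _ σ.nodup_flatten_cycleBlocks
          (by simp [cycleBlocks, isChain_orbitList])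
      _ ≤ _ := σ.length_cycleBlocks_le

end Equiv.Perm

section Householder

variable {K ι m : Type*} [Field K] [Fintype ι] [DecidableEq ι]

def householder (w : ι → K) : Matrix ι ι K := 1 - (2 / (w ⬝ᵥ w)) • vecMulVec w w

lemma householder_mul_transpose {w : ι → K} (hw : w ⬝ᵥ w ≠ 0) :
    householder w * (householder w)ᵀ = 1 := by
  have h : 2 / (w ⬝ᵥ w) * (2 / (w ⬝ᵥ w)) * (w ⬝ᵥ w) =
      2 / (w ⬝ᵥ w) + 2 / (w ⬝ᵥ w) := by
    field_simp; ring
  simp only [householder, transpose_sub, transpose_one, transpose_smul, transpose_vecMulVec,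
    Matrix.sub_mul, Matrix.mul_sub, Matrix.one_mul, Matrix.mul_one, smul_mul_smul_comm,
    vecMulVec_mul_vecMulVec, vecMulVec_smul, smul_smul, h, add_smul]
  abel

lemma mul_householder_apply (M : Matrix m ι K) (w : ι → K) (a : m) (j : ι) :
    (M * householder w) a j = M a j - 2 / (w ⬝ᵥ w) * (M *ᵥ w) a * w j := by
  simp only [householder, Matrix.mul_sub, Matrix.mul_one, Matrix.mul_smul, mul_vecMulVec,
    Matrix.sub_apply, Matrix.smul_apply, vecMulVec_apply, smul_eq_mul]
  ring

lemma mul_householder_single_add_single_apply {i j : ι} (hij : i ≠ j) {t : K}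
    (ht : 1 + t ^ 2 ≠ 0) (M : Matrix m ι K) (a : m) :
    (M * householder (Pi.single i 1 + Pi.single j t : ι → K)) a i =
      ((t ^ 2 - 1) * M a i - 2 * t * M a j) / (1 + t ^ 2) := by
  have hww : (Pi.single i 1 + Pi.single j t : ι → K) ⬝ᵥ (Pi.single i 1 + Pi.single j t) =
      1 + t ^ 2 := by
    simp [hij, hij.symm, sq]
  have hMw : (M *ᵥ (Pi.single i 1 + Pi.single j t)) a = M a i + t * M a j := by
    simp [mulVec_add]
  have hwi : (Pi.single i 1 + Pi.single j t : ι → K) i = 1 := by simp [hij]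
  rw [mul_householder_apply, hww, hMw, hwi]
  field_simp
  ring

end Householder

instance matrixBorelSpace (n : ℕ) : BorelSpace (Matrix (Fin n) (Fin n) ℝ) :=
  inferInstanceAs (BorelSpace (Fin n → Fin n → ℝ))

namespace IsHaarOrthogonal

open Finset

variable {n : ℕ} {μ : Measure (Matrix (Fin n) (Fin n) ℝ)}

lemma integral_comp_mul_right (hμ : IsHaarOrthogonal n μ) {V : Matrix (Fin n) (Fin n) ℝ}
    (hV : V * Vᵀ = 1) {f : Matrix (Fin n) (Fin n) ℝ → ℝ} (hf : Continuous f) :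
    ∫ M, f (M * V) ∂μ = ∫ M, f M ∂μ := by
  conv_rhs => rw [← hμ.right_inv V hV]
  exact (integral_map (by fun_prop : Continuous fun M => M * V).aemeasurable
    hf.aestronglyMeasurable).symm

lemma integral_comp_submatrix_perm (hμ : IsHaarOrthogonal n μ) (τ : Equiv.Perm (Fin n))
    {f : Matrix (Fin n) (Fin n) ℝ → ℝ} (hf : Continuous f) :
    ∫ M, f (M.submatrix id τ) ∂μ = ∫ M, f M ∂μ := by
  have hP : τ⁻¹.permMatrix ℝ * (τ⁻¹.permMatrix ℝ)ᵀ = 1 := by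
    rw [transpose_permMatrix, ← permMatrix_mul, inv_mul_cancel, permMatrix_one]
  simpa [PEquiv.mul_toMatrix_toPEquiv, Equiv.Perm.inv_def] using hμ.integral_comp_mul_right hP hf

lemma integral_comp_mul_householder (hμ : IsHaarOrthogonal n μ) {w : Fin n → ℝ} (hw : w ≠ 0)
    {f : Matrix (Fin n) (Fin n) ℝ → ℝ} (hf : Continuous f) :
    ∫ M, f (M * householder w) ∂μ = ∫ M, f M ∂μ :=
  hμ.integral_comp_mul_right (householder_mul_transpose (by simpa using hw)) hf

lemma ae_sum_sq_row (hμ : IsHaarOrthogonal n μ) :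
    ∀ᵐ M ∂μ, ∀ a, ∑ j, M a j ^ 2 = 1 := by
  filter_upwards [hμ.ae_orth] with M hM a
  simpa [Matrix.mul_apply, sq] using congr_fun₂ hM a a

lemma ae_abs_le_one (hμ : IsHaarOrthogonal n μ) :
    ∀ᵐ M ∂μ, ∀ a j, |M a j| ≤ 1 := by
  filter_upwards [hμ.ae_sum_sq_row] with M hM a j
  rw [← sq_le_one_iff_abs_le_one, ← hM a]
  exact single_le_sum (fun k _ => sq_nonneg (M a k)) (mem_univ j)

lemma integrable_of_continuous (hμ : IsHaarOrthogonal n μ)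
    {f : Matrix (Fin n) (Fin n) ℝ → ℝ} (hf : Continuous f) : Integrable f μ := by
  have := hμ.isProb
  have hK : IsCompact
      (Set.univ.pi fun _ : Fin n => Set.univ.pi fun _ : Fin n => Set.Icc (-1 : ℝ) 1) :=
    isCompact_univ_pi fun _ => isCompact_univ_pi fun _ => isCompact_Icc
  obtain ⟨C, hC⟩ := hK.exists_bound_of_continuousOn hf.continuousOn
  refine .of_bound hf.aestronglyMeasurable C ?_
  filter_upwards [hμ.ae_abs_le_one] with M hM using hC M fun a _ j _ => abs_le.mp (hM a j)

lemma integral_entry_sq (hμ : IsHaarOrthogonal n μ) (a i : Fin n) :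
    ∫ M, M a i ^ 2 ∂μ = (n : ℝ)⁻¹ := by
  have := hμ.isProb
  have hcol (j : Fin n) : ∫ M, M a j ^ 2 ∂μ = ∫ M, M a i ^ 2 ∂μ := by
    simpa using hμ.integral_comp_submatrix_perm (Equiv.swap i j) (f := fun M => M a i ^ 2)
      (by fun_prop)
  have hrow : ∑ j, ∫ M, M a j ^ 2 ∂μ = 1 := by
    rw [← integral_finsetSum _ fun j _ => hμ.integrable_of_continuous (by fun_prop)]
    rw [integral_congr_ae (g := fun _ => (1 : ℝ)) (by
      filter_upwards [hμ.ae_sum_sq_row] with M hM using hM a)]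
    simp
  simp only [hcol, sum_const, card_univ, Fintype.card_fin, nsmul_eq_mul] at hrow
  exact eq_inv_of_mul_eq_one_right hrow

lemma integral_entry_pow_four_eq (hμ : IsHaarOrthogonal n μ) (a : Fin n) {i j : Fin n}
    (hij : i ≠ j) : ∫ M, M a i ^ 4 ∂μ = 3 * ∫ M, M a i ^ 2 * M a j ^ 2 ∂μ := by
  have hint {f : Matrix (Fin n) (Fin n) ℝ → ℝ} (hf : Continuous f) : Integrable f μ :=
    hμ.integrable_of_continuous hf
  have hreflect (t : ℝ) : ∫ M, (((t ^ 2 - 1) * M a i - 2 * t * M a j) / (1 + t ^ 2)) ^ 4 ∂μ =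
      ∫ M, M a i ^ 4 ∂μ := by
    have hw : (Pi.single i 1 + Pi.single j t : Fin n → ℝ) ≠ 0 := fun h => by
      simpa [hij] using congr_fun h i
    simpa [mul_householder_single_add_single_apply hij (by positivity : 1 + t ^ 2 ≠ 0)]
      using hμ.integral_comp_mul_householder hw (f := fun M => M a i ^ 4) (by fun_prop)
  have hswap : ∫ M, M a j ^ 4 ∂μ = ∫ M, M a i ^ 4 ∂μ := by
    simpa using hμ.integral_comp_submatrix_perm (Equiv.swap i j) (f := fun M => M a i ^ 4)
      (by fun_prop)
  -- The odd moments cancel between the reflections with `t = 2` and `t = -2`.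
  have hsum : 2 * ∫ M, M a i ^ 4 ∂μ =
      162 / 625 * ∫ M, M a i ^ 4 ∂μ + 1728 / 625 * ∫ M, M a i ^ 2 * M a j ^ 2 ∂μ
        + 512 / 625 * ∫ M, M a j ^ 4 ∂μ := calc
    _ = ∫ M, (((2 ^ 2 - 1) * M a i - 2 * 2 * M a j) / (1 + 2 ^ 2)) ^ 4 ∂μ
          + ∫ M, ((((-2) ^ 2 - 1) * M a i - 2 * (-2) * M a j) / (1 + (-2) ^ 2)) ^ 4 ∂μ := by
      rw [hreflect, hreflect]
      ring
    _ = ∫ M, ((((2 ^ 2 - 1) * M a i - 2 * 2 * M a j) / (1 + 2 ^ 2)) ^ 4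
          + ((((-2) ^ 2 - 1) * M a i - 2 * (-2) * M a j) / (1 + (-2) ^ 2)) ^ 4) ∂μ :=
      (integral_add (hint (by fun_prop)) (hint (by fun_prop))).symm
    _ = ∫ M, (162 / 625 * M a i ^ 4 + 1728 / 625 * (M a i ^ 2 * M a j ^ 2)
          + 512 / 625 * M a j ^ 4) ∂μ := by
      congr 1 with M
      ring
    _ = _ := by
      rw [integral_add (hint (by fun_prop)) (hint (by fun_prop)),
        integral_add (hint (by fun_prop)) (hint (by fun_prop)),
        integral_const_mul, integral_const_mul, integral_const_mul]
  linarith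

lemma integral_entry_pow_four (hμ : IsHaarOrthogonal n μ) (hn : 1 < n) (a i : Fin n) :
    ∫ M, M a i ^ 4 ∂μ = 3 / (n * (n + 2)) := by
  obtain ⟨j, hji⟩ := Fintype.exists_ne_of_one_lt_card (by simpa using hn) i
  set m := ∫ M, M a i ^ 2 * M a j ^ 2 ∂μ
  have h4 : ∫ M, M a i ^ 2 * M a i ^ 2 ∂μ = 3 * m := by
    rw [← hμ.integral_entry_pow_four_eq a hji.symm]
    congr 1 with M
    ring
  have hcol (k : Fin n) (hki : k ≠ i) : ∫ M, M a i ^ 2 * M a k ^ 2 ∂μ = m := by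
    simpa [Equiv.swap_apply_of_ne_of_ne hji.symm hki.symm] using
      hμ.integral_comp_submatrix_perm (Equiv.swap j k) (f := fun M => M a i ^ 2 * M a j ^ 2)
        (by fun_prop)
  have hrow : ∑ k, ∫ M, M a i ^ 2 * M a k ^ 2 ∂μ = (n : ℝ)⁻¹ := by
    rw [← integral_finsetSum _ fun k _ => hμ.integrable_of_continuous (by fun_prop),
      ← hμ.integral_entry_sq a i]
    refine integral_congr_ae ?_
    filter_upwards [hμ.ae_sum_sq_row] with M hM
    simp [← mul_sum, hM a]
  rw [← add_sum_erase _ _ (mem_univ i), sum_congr rfl fun k hk => hcol k (ne_of_mem_erase hk),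
    sum_const, card_erase_of_mem (mem_univ i), card_univ, Fintype.card_fin, nsmul_eq_mul,
    Nat.cast_pred (by omega), h4] at hrow
  field_simp at hrow
  rw [hμ.integral_entry_pow_four_eq a hji.symm, eq_div_iff (by positivity)]
  linear_combination 3 * hrow

lemma integral_entry_sq_mul_entry_sq_le (hμ : IsHaarOrthogonal n μ) (hn : 1 < n)
    (a i b j : Fin n) : ∫ M, M a i ^ 2 * M b j ^ 2 ∂μ ≤ 3 / n ^ 2 := by
  have hn0 : (0 : ℝ) < n := by positivity
  calc ∫ M, M a i ^ 2 * M b j ^ 2 ∂μ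
      ≤ ∫ M, (M a i ^ 4 + M b j ^ 4) / 2 ∂μ :=
        integral_mono (hμ.integrable_of_continuous (by fun_prop))
          (hμ.integrable_of_continuous (by fun_prop))
          fun M => by nlinarith [sq_nonneg (M a i ^ 2 - M b j ^ 2)]
    _ = 3 / (n * (n + 2)) := by
        rw [integral_div, integral_add (hμ.integrable_of_continuous (by fun_prop))
          (hμ.integrable_of_continuous (by fun_prop)), hμ.integral_entry_pow_four hn,
          hμ.integral_entry_pow_four hn]
        ring
    _ ≤ 3 / n ^ 2 := by gcongr; nlinarith

lemma integral_sq_sub_le (hμ : IsHaarOrthogonal n μ) (hn : 1 < n) (a b : Fin n)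
    (σ c : Equiv.Perm (Fin n)) :
    ∫ M, (Real.sqrt n * ∑ i, M a i * M b (σ i) -
        Real.sqrt n * ∑ i, M a i * M b (c i)) ^ 2 ∂μ ≤
      12 * (#{i | σ i ≠ c i} : ℝ) ^ 2 / n := by
  set S := ({i | σ i ≠ c i} : Finset (Fin n))
  have hn0 : (0 : ℝ) < n := by positivity
  have hpoint (M : Matrix (Fin n) (Fin n) ℝ) :
      (Real.sqrt n * ∑ i, M a i * M b (σ i) - Real.sqrt n * ∑ i, M a i * M b (c i)) ^ 2 ≤
        n * (#S * ∑ i ∈ S,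
          (2 * (M a i ^ 2 * M b (σ i) ^ 2) + 2 * (M a i ^ 2 * M b (c i) ^ 2))) := by
    have hS : ∑ i, M a i * M b (σ i) - ∑ i, M a i * M b (c i) =
        ∑ i ∈ S, (M a i * M b (σ i) - M a i * M b (c i)) := by
      rw [← sum_sub_distrib, sum_filter_of_ne]
      intro i _ hi
      contrapose! hi
      rw [hi, sub_self]
    rw [← mul_sub, mul_pow, Real.sq_sqrt hn0.le, hS]
    gcongr
    refine sq_sum_le_card_mul_sum_sq.trans ?_
    gcongr with i
    nlinarith [sq_nonneg (M a i * M b (σ i) + M a i * M b (c i))]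
  have hint {f : Matrix (Fin n) (Fin n) ℝ → ℝ} (hf : Continuous f) : Integrable f μ :=
    hμ.integrable_of_continuous hf
  calc _ ≤ ∫ M, (n : ℝ) * (#S * ∑ i ∈ S,
          (2 * (M a i ^ 2 * M b (σ i) ^ 2) + 2 * (M a i ^ 2 * M b (c i) ^ 2))) ∂μ :=
        integral_mono (hint (by fun_prop)) (hint (by fun_prop)) hpoint
    _ = (n : ℝ) * (#S * ∑ i ∈ S, (2 * ∫ M, M a i ^ 2 * M b (σ i) ^ 2 ∂μ
          + 2 * ∫ M, M a i ^ 2 * M b (c i) ^ 2 ∂μ)) := by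
        rw [integral_const_mul, integral_const_mul,
          integral_finsetSum _ fun i _ => hint (by fun_prop)]
        congr 2
        refine sum_congr rfl fun i _ => ?_
        rw [integral_add (hint (by fun_prop)) (hint (by fun_prop)), integral_const_mul,
          integral_const_mul]
    _ ≤ (n : ℝ) * (#S * ∑ i ∈ S, (2 * (3 / (n : ℝ) ^ 2) + 2 * (3 / (n : ℝ) ^ 2))) := by
        gcongr <;> exact hμ.integral_entry_sq_mul_entry_sq_le hn _ _ _ _
    _ = 12 * (#S : ℝ) ^ 2 / n := by
        rw [sum_const, nsmul_eq_mul]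
        field_simp
        ring

end IsHaarOrthogonal

/-- for a permutation `σ` with `k` cycles, with
`X_n = √n ∑_i M_{a,i} M_{b,σ(i)}` and `Y_n = √n ∑_i M_{a,i} M_{b,c(i)}` for an `n`-cycle
`c` with a compatible labeling, one has `E[(X_n − Y_n)²] ≤ 4k²·C/n` for an absolute
constant `C` and all sufficiently large `n`. -/
theorem stmt9 :
    ∃ C : ℝ, 0 < C ∧ ∃ N : ℕ, ∀ n ≥ N, ∀ μ : Measure (Matrix (Fin n) (Fin n) ℝ),
      IsHaarOrthogonal n μ → ∀ a b : Fin n, ∀ σ : Equiv.Perm (Fin n),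
      ∃ c : Equiv.Perm (Fin n), c.cycleType = {n} ∧
        ∫ M, (Real.sqrt n * ∑ i, M a i * M b (σ i) -
              Real.sqrt n * ∑ i, M a i * M b (c i)) ^ 2 ∂μ ≤
          4 * (cycleCount σ : ℝ) ^ 2 * C / n := by
  refine ⟨3, by norm_num, 2, fun n hn μ hμ a b σ => ?_⟩
  obtain ⟨c, hc, hcard⟩ := σ.exists_cycleType_eq_card_filter_apply_ne_le (by simpa using hn)
  refine ⟨c, by simpa using hc, (hμ.integral_sq_sub_le (by omega) a b σ c).trans ?_⟩
  calc _ ≤ 12 * (cycleCount σ : ℝ) ^ 2 / n := by gcongr; exact_mod_cast hcard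
    _ = _ := by ring
end

section
/- Let A_n be n×n real matrices with Tr(A_n A_nᵀ) = n and Σ_i A_{ii}/n → s. Let M be an n×n Haar-distributed orthogonal matrix and fix a column k. Then V_n = Σ_{i=1}^n A_{ii} M_{i,k}² converges to s in L², i.e., E[(Σ_i A_{ii}(M_{i,k}² − 1/n))²] = O(1/n). -/
/-! The column `x = M eₖ` of a Haar orthogonal matrix is a random unit vector whose law is
invariant under every orthogonal map, and Householder reflections are enough to compute its
moments. The reflection swapping two coordinates makes the law of `x i` independent of `i`, so
`E[x_i²] = 1/n`. The reflections sending `x_i` to `-(3 x_i ± 4 x_j)/5` give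
`E[x_i⁴] = 3 E[x_i² x_j²]` for `i ≠ j`, and integrating `x_i² ∑_j x_j² = x_i²` then yields
`E[x_i⁴] = 3/(n(n+2))`. Expanding the square,
`E[(∑ a_i x_i² - t)²] ≤ 2 ∑ a_i² / (n(n+2)) + ((∑ a_i)/n - t)²`, and `∑ A_ii² ≤ Tr(A Aᵀ) = n`
makes the first term at most `2/n`. -/

open MeasureTheory Matrix

theorem integral_sub_const_sq {Ω : Type*} [MeasurableSpace Ω] {μ : Measure Ω}
    [IsProbabilityMeasure μ] {Y : Ω → ℝ} (hY : Integrable Y μ)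
    (hY2 : Integrable (fun ω => Y ω ^ 2) μ) (t : ℝ) :
    ∫ ω, (Y ω - t) ^ 2 ∂μ = ∫ ω, Y ω ^ 2 ∂μ - 2 * t * ∫ ω, Y ω ∂μ + t ^ 2 := by
  have hpt : ∀ ω, (Y ω - t) ^ 2 = (Y ω ^ 2 - 2 * t * Y ω) + t ^ 2 := fun ω => by ring
  have hdiff : Integrable (fun ω => Y ω ^ 2 - 2 * t * Y ω) μ := hY2.sub (hY.const_mul _)
  simp only [hpt]
  rw [integral_add hdiff (integrable_const _), integral_sub hY2 (hY.const_mul _),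
    integral_const_mul, integral_const]
  simp

namespace Matrix

variable {ι : Type*} [Fintype ι]

theorem sum_diag_sq_le_trace_mul_transpose (B : Matrix ι ι ℝ) :
    ∑ i, B i i ^ 2 ≤ trace (B * Bᵀ) := by
  simp only [trace, diag, mul_apply, transpose_apply, ← sq]
  exact Finset.sum_le_sum fun i _ =>
    Finset.single_le_sum (f := fun j => B i j ^ 2) (fun j _ => sq_nonneg _) (Finset.mem_univ i)

variable [DecidableEq ι]

/-- For `v = 0` the junk value `2 / 0 = 0` makes this the identity, so it is orthogonal for
every `v`. -/
noncomputable def householder (v : ι → ℝ) : Matrix ι ι ℝ :=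
  1 - (2 / (v ⬝ᵥ v)) • vecMulVec v v

theorem householder_mul_transpose (v : ι → ℝ) : householder v * (householder v)ᵀ = 1 := by
  have hsq : vecMulVec v v * vecMulVec v v = (v ⬝ᵥ v) • vecMulVec v v := by
    rw [vecMulVec_mul_vecMulVec, vecMulVec_smul]
  have hc : 2 / (v ⬝ᵥ v) * (2 / (v ⬝ᵥ v)) * (v ⬝ᵥ v) = 2 * (2 / (v ⬝ᵥ v)) := by
    rcases eq_or_ne (v ⬝ᵥ v) 0 with h | h
    · simp [h]
    · field_simp
  simp only [householder, transpose_sub, transpose_one, transpose_smul, transpose_vecMulVec,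
    sub_mul, mul_sub, one_mul, mul_one, smul_mul, Matrix.mul_smul]
  rw [hsq, smul_smul, smul_smul, hc]
  module

theorem householder_single_sub_single_mulVec_apply (x : ι → ℝ) (i j : ι) :
    (householder (Pi.single i 1 - Pi.single j 1) *ᵥ x) i = x j := by
  rcases eq_or_ne i j with rfl | hij
  · simp [householder]
  · simp [householder, sub_mulVec, smul_mulVec, vecMulVec_mulVec, dotProduct_sub,
      sub_dotProduct, hij, hij.symm]
    ring

theorem householder_single_add_single_mulVec_apply (x : ι → ℝ) {i j : ι} (hij : i ≠ j)
    {ε : ℝ} (hε : ε ^ 2 = 1) :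
    (householder (Pi.single i 2 + Pi.single j ε) *ᵥ x) i = -(3 * x i + 4 * ε * x j) / 5 := by
  have hnorm : (2 : ℝ) * 2 + ε * ε = 5 := by nlinarith
  simp [householder, sub_mulVec, smul_mulVec, vecMulVec_mulVec, dotProduct_add, add_dotProduct,
    hij, hij.symm, hnorm]
  ring

theorem measurable_col {n : ℕ} (k : Fin n) :
    Measurable fun (M : Matrix (Fin n) (Fin n) ℝ) (i : Fin n) => M i k :=
  measurable_pi_lambda _ fun i => (measurable_pi_apply k).comp (measurable_pi_apply i)

theorem measurable_mul_left {n : ℕ} (V : Matrix (Fin n) (Fin n) ℝ) :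
    Measurable fun M : Matrix (Fin n) (Fin n) ℝ => V * M :=
  measurable_pi_lambda _ fun i => measurable_pi_lambda _ fun j => by
    simp only [mul_apply]
    exact Finset.measurable_sum _ fun l _ => ((measurable_col j).eval (a := l)).const_mul _

end Matrix

structure IsOrthInvariantOnSphere {ι : Type*} [Fintype ι] [DecidableEq ι] (ν : Measure (ι → ℝ)) :
    Prop where
  isProbabilityMeasure : IsProbabilityMeasure ν
  ae_sum_sq : ∀ᵐ x ∂ν, ∑ i, x i ^ 2 = 1
  map_mulVec : ∀ V : Matrix ι ι ℝ, V * Vᵀ = 1 → ν.map (V *ᵥ ·) = ν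

namespace IsOrthInvariantOnSphere

variable {ι : Type*} [Fintype ι] [DecidableEq ι] {ν : Measure (ι → ℝ)}

theorem card_pos (hν : IsOrthInvariantOnSphere ν) : (0 : ℝ) < Fintype.card ι := by
  suffices Nonempty ι by exact_mod_cast Fintype.card_pos
  by_contra hι
  rw [not_nonempty_iff] at hι
  have := hν.isProbabilityMeasure
  have : ∀ᵐ _ ∂ν, False := hν.ae_sum_sq.mono fun x hx => by simp at hx
  exact IsProbabilityMeasure.ne_zero ν (by simpa using this)

theorem integrable_of_continuous (hν : IsOrthInvariantOnSphere ν) {E : Type*}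
    [NormedAddCommGroup E] {f : (ι → ℝ) → E} (hf : Continuous f) : Integrable f ν := by
  have := hν.isProbabilityMeasure
  obtain ⟨C, hC⟩ := (isCompact_closedBall (0 : ι → ℝ) 1).exists_bound_of_continuousOn
    hf.continuousOn
  refine Integrable.of_bound hf.aestronglyMeasurable C ?_
  filter_upwards [hν.ae_sum_sq] with x hx
  refine hC x (mem_closedBall_zero_iff.2 ((pi_norm_le_iff_of_nonneg zero_le_one).2 fun i => ?_))
  rw [Real.norm_eq_abs, ← sq_le_one_iff_abs_le_one, ← hx]
  exact Finset.single_le_sum (f := fun j => x j ^ 2) (fun j _ => sq_nonneg _) (Finset.mem_univ i)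

theorem integral_comp_mulVec (hν : IsOrthInvariantOnSphere ν) {E : Type*}
    [NormedAddCommGroup E] [NormedSpace ℝ E] {V : Matrix ι ι ℝ} (hV : V * Vᵀ = 1)
    {f : (ι → ℝ) → E} (hf : AEStronglyMeasurable f ν) :
    ∫ x, f (V *ᵥ x) ∂ν = ∫ x, f x ∂ν := by
  rw [← hν.map_mulVec V hV] at hf
  conv_rhs => rw [← hν.map_mulVec V hV]
  exact (integral_map (by fun_prop) hf).symm

theorem integral_comp_apply_eq (hν : IsOrthInvariantOnSphere ν) {g : ℝ → ℝ} (hg : Measurable g)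
    (i j : ι) : ∫ x, g (x i) ∂ν = ∫ x, g (x j) ∂ν := by
  have hinv := hν.integral_comp_mulVec
    (householder_mul_transpose (Pi.single i 1 - Pi.single j 1))
    (f := fun x => g (x i)) (hg.comp (measurable_pi_apply i)).aestronglyMeasurable
  simpa only [householder_single_sub_single_mulVec_apply] using hinv.symm

theorem integral_sq_apply (hν : IsOrthInvariantOnSphere ν) (i : ι) :
    ∫ x, x i ^ 2 ∂ν = 1 / Fintype.card ι := by
  have := hν.isProbabilityMeasure
  have hsum : ∑ j, ∫ x, x j ^ 2 ∂ν = 1 := by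
    rw [← integral_finsetSum _ fun j _ => hν.integrable_of_continuous (by fun_prop),
      integral_congr_ae hν.ae_sum_sq]
    simp
  rw [Finset.sum_congr rfl fun j _ => hν.integral_comp_apply_eq (g := (· ^ 2)) (by fun_prop) j i,
    Finset.sum_const, Finset.card_univ, nsmul_eq_mul] at hsum
  rw [eq_div_iff hν.card_pos.ne']
  linarith

theorem integral_sq_mul_sq_of_ne (hν : IsOrthInvariantOnSphere ν) {i j : ι} (hij : i ≠ j) :
    3 * ∫ x, x i ^ 2 * x j ^ 2 ∂ν = ∫ x, x i ^ 4 ∂ν := by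
  have hrot : ∀ ε : ℝ, ε ^ 2 = 1 →
      ∫ x, ((3 * x i + 4 * ε * x j) / 5) ^ 4 ∂ν = ∫ x, x i ^ 4 ∂ν := by
    intro ε hε
    have hinv := hν.integral_comp_mulVec
      (householder_mul_transpose (Pi.single i 2 + Pi.single j ε))
      (f := fun x => x i ^ 4) ((continuous_apply i).pow 4).aestronglyMeasurable
    simp only [householder_single_add_single_mulVec_apply _ hij hε] at hinv
    rw [← hinv]
    congr 1 with x
    ring
  have h4 : ∫ x, x j ^ 4 ∂ν = ∫ x, x i ^ 4 ∂ν :=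
    hν.integral_comp_apply_eq (g := (· ^ 4)) (by fun_prop) j i
  -- averaging the reflections for `ε = 1` and `ε = -1` cancels the odd moments
  have key : 2 * ∫ x, x i ^ 4 ∂ν = 162 / 625 * ∫ x, x i ^ 4 ∂ν
      + 1728 / 625 * ∫ x, x i ^ 2 * x j ^ 2 ∂ν + 512 / 625 * ∫ x, x i ^ 4 ∂ν := by
    calc 2 * ∫ x, x i ^ 4 ∂ν
        = ∫ x, ((3 * x i + 4 * 1 * x j) / 5) ^ 4 + ((3 * x i + 4 * (-1) * x j) / 5) ^ 4 ∂ν := by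
          rw [integral_add (hν.integrable_of_continuous (by fun_prop))
            (hν.integrable_of_continuous (by fun_prop)), hrot 1 (by norm_num),
            hrot (-1) (by norm_num)]
          ring
      _ = ∫ x, 162 / 625 * x i ^ 4 + 1728 / 625 * (x i ^ 2 * x j ^ 2)
            + 512 / 625 * x j ^ 4 ∂ν := by
          congr 1 with x
          ring
      _ = _ := by
          rw [integral_add (hν.integrable_of_continuous (by fun_prop))
            (hν.integrable_of_continuous (by fun_prop)), integral_add
            (hν.integrable_of_continuous (by fun_prop)) (hν.integrable_of_continuous (by fun_prop)),
            integral_const_mul, integral_const_mul, integral_const_mul, h4]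
  linarith

theorem integral_pow_four_apply (hν : IsOrthInvariantOnSphere ν) (i : ι) :
    ∫ x, x i ^ 4 ∂ν = 3 / (Fintype.card ι * (Fintype.card ι + 2)) := by
  set α := ∫ x, x i ^ 4 ∂ν
  have hterm : ∀ j, ∫ x, x i ^ 2 * x j ^ 2 ∂ν = α / 3 + if j = i then 2 * α / 3 else 0 := by
    intro j
    rcases eq_or_ne j i with rfl | hji
    · simp only [α, ← pow_add, if_true]
      ring
    · rw [if_neg hji]
      linarith [hν.integral_sq_mul_sq_of_ne hji.symm]
  have hsum : ∑ j, ∫ x, x i ^ 2 * x j ^ 2 ∂ν = 1 / Fintype.card ι := by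
    rw [← integral_finsetSum _ fun j _ => hν.integrable_of_continuous (by fun_prop),
      ← hν.integral_sq_apply i]
    refine integral_congr_ae (hν.ae_sum_sq.mono fun x hx => ?_)
    simp only [← Finset.mul_sum, hx, mul_one]
  simp only [hterm, Finset.sum_add_distrib, Finset.sum_ite_eq', Finset.mem_univ, if_true,
    Finset.sum_const, Finset.card_univ, nsmul_eq_mul] at hsum
  have hN := hν.card_pos
  rw [eq_div_iff (by positivity)]
  field_simp at hsum
  linarith

theorem integral_sq_mul_sq_apply (hν : IsOrthInvariantOnSphere ν) (i j : ι) :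
    ∫ x, x i ^ 2 * x j ^ 2 ∂ν
      = (if i = j then 3 else 1) / (Fintype.card ι * (Fintype.card ι + 2)) := by
  rcases eq_or_ne i j with rfl | hij
  · simp only [← pow_add, if_true]
    exact hν.integral_pow_four_apply i
  · have h3 := hν.integral_sq_mul_sq_of_ne hij
    rw [hν.integral_pow_four_apply i] at h3
    rw [if_neg hij]
    linear_combination h3 / 3

theorem integral_sum_mul_sq (hν : IsOrthInvariantOnSphere ν) (a : ι → ℝ) :
    ∫ x, ∑ i, a i * x i ^ 2 ∂ν = (∑ i, a i) / Fintype.card ι := by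
  rw [integral_finsetSum _ fun i _ => hν.integrable_of_continuous (by fun_prop), Finset.sum_div]
  simp only [integral_const_mul, hν.integral_sq_apply, mul_one_div]

theorem integral_sum_mul_sq_sq (hν : IsOrthInvariantOnSphere ν) (a : ι → ℝ) :
    ∫ x, (∑ i, a i * x i ^ 2) ^ 2 ∂ν
      = ((∑ i, a i) ^ 2 + 2 * ∑ i, a i ^ 2) / (Fintype.card ι * (Fintype.card ι + 2)) := by
  have hexp : ∀ x : ι → ℝ,
      (∑ i, a i * x i ^ 2) ^ 2 = ∑ i, ∑ j, a i * a j * (x i ^ 2 * x j ^ 2) := fun x => by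
    rw [sq, Finset.sum_mul_sum]
    exact Finset.sum_congr rfl fun i _ => Finset.sum_congr rfl fun j _ => by ring
  have hrow : ∀ i, ∫ x, ∑ j, a i * a j * (x i ^ 2 * x j ^ 2) ∂ν
      = ∑ j, a i * a j * (if i = j then 3 else 1) / (Fintype.card ι * (Fintype.card ι + 2)) := by
    intro i
    rw [integral_finsetSum _ fun j _ => hν.integrable_of_continuous (by fun_prop)]
    simp only [integral_const_mul, hν.integral_sq_mul_sq_apply, mul_div_assoc']
  have hcoef : ∀ i j : ι, a i * a j * (if i = j then 3 else 1) =
      a i * a j + if i = j then 2 * a i ^ 2 else 0 := fun i j => by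
    split_ifs with h
    · subst h; ring
    · ring
  simp only [hexp]
  rw [integral_finsetSum _ fun i _ => integrable_finsetSum _ fun j _ =>
    hν.integrable_of_continuous (by fun_prop)]
  simp only [hrow, ← Finset.sum_div, hcoef, Finset.sum_add_distrib, Finset.sum_ite_eq,
    Finset.mem_univ, if_true, ← Finset.mul_sum, ← Finset.sum_mul, ← sq]

theorem integral_sum_mul_sq_sub_sq_le (hν : IsOrthInvariantOnSphere ν) (a : ι → ℝ) (t : ℝ) :
    ∫ x, (∑ i, a i * x i ^ 2 - t) ^ 2 ∂ν
      ≤ 2 * (∑ i, a i ^ 2) / (Fintype.card ι * (Fintype.card ι + 2))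
        + ((∑ i, a i) / Fintype.card ι - t) ^ 2 := by
  have := hν.isProbabilityMeasure
  have hN := hν.card_pos
  have hA : (∑ i, a i) ^ 2 / (Fintype.card ι * (Fintype.card ι + 2))
      ≤ (∑ i, a i) ^ 2 / Fintype.card ι ^ 2 :=
    div_le_div_of_nonneg_left (sq_nonneg _) (by positivity) (by nlinarith)
  rw [integral_sub_const_sq (hν.integrable_of_continuous (by fun_prop))
    (hν.integrable_of_continuous (by fun_prop)), hν.integral_sum_mul_sq_sq,
    hν.integral_sum_mul_sq, add_div]
  have : ((∑ i, a i) / Fintype.card ι - t) ^ 2 = (∑ i, a i) ^ 2 / Fintype.card ι ^ 2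
      - 2 * t * ((∑ i, a i) / Fintype.card ι) + t ^ 2 := by ring
  linarith

end IsOrthInvariantOnSphere

namespace IsHaarOrthogonal

variable {n : ℕ} {μ : Measure (Matrix (Fin n) (Fin n) ℝ)}

theorem isOrthInvariantOnSphere_map_col (h : IsHaarOrthogonal n μ) (k : Fin n) :
    IsOrthInvariantOnSphere (μ.map fun M i => M i k) where
  isProbabilityMeasure := by
    have := h.isProb
    exact Measure.isProbabilityMeasure_map (measurable_col k).aemeasurable
  ae_sum_sq := by
    rw [ae_map_iff (measurable_col k).aemeasurable
      (measurableSet_eq_fun (by fun_prop) measurable_const)]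
    filter_upwards [h.ae_orth] with M hM
    simpa [mul_apply, sq] using congrArg (fun P => P k k) (mul_eq_one_comm.mp hM)
  map_mulVec V hV := by
    rw [Measure.map_map (by fun_prop) (measurable_col k)]
    change Measure.map ((fun M i => M i k) ∘ (V * ·)) μ = _
    rw [← Measure.map_map (measurable_col k) (measurable_mul_left V), h.left_inv V hV]

theorem integral_sum_mul_sq_sub_sq_le (h : IsHaarOrthogonal n μ) (k : Fin n) {a : Fin n → ℝ}
    (ha : ∑ i, a i ^ 2 ≤ n) (t : ℝ) :
    ∫ M, (∑ i, a i * M i k ^ 2 - t) ^ 2 ∂μ ≤ 2 / n + ((∑ i, a i) / n - t) ^ 2 := by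
  have hbound := (h.isOrthInvariantOnSphere_map_col k).integral_sum_mul_sq_sub_sq_le a t
  rw [integral_map (measurable_col k).aemeasurable
    (by fun_prop : Continuous fun x : Fin n → ℝ => _).aestronglyMeasurable] at hbound
  simp only [Fintype.card_fin] at hbound
  refine hbound.trans (add_le_add_left ?_ _)
  have hn : (0 : ℝ) < n := by exact_mod_cast k.pos
  rw [div_le_div_iff₀ (by positivity) hn]
  nlinarith

end IsHaarOrthogonal

/-- with `Tr(A_n A_nᵀ) = n` and `∑_i A_{ii}/n → s`,
`V_n = ∑_i A_{ii} M_{i,k}²` converges to `s` in `L²`, and more precisely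
`E[(∑_i A_{ii}(M_{i,k}² − 1/n))²] = O(1/n)`. -/
theorem stmt16 (A : ∀ n : ℕ, Matrix (Fin n) (Fin n) ℝ)
    (hA : ∀ n, Matrix.trace (A n * (A n)ᵀ) = (n : ℝ))
    (s : ℝ)
    (hs : Filter.Tendsto (fun n => (∑ i, A n i i) / (n : ℝ)) Filter.atTop (nhds s))
    (μ : ∀ n : ℕ, Measure (Matrix (Fin n) (Fin n) ℝ))
    (hμ : ∀ n, IsHaarOrthogonal n (μ n)) :
    (∃ C : ℝ, ∀ n : ℕ, ∀ k : Fin n,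
      ∫ M, (∑ i, A n i i * ((M i k) ^ 2 - 1 / n)) ^ 2 ∂(μ n) ≤ C / n) ∧
    (∀ k : ∀ n : ℕ, Fin (n + 1),
      Filter.Tendsto
        (fun n => ∫ M, (∑ i, A (n + 1) i i * (M i (k n)) ^ 2 - s) ^ 2 ∂(μ (n + 1)))
        Filter.atTop (nhds 0)) := by
  have hdiag : ∀ n, ∑ i, A n i i ^ 2 ≤ n := fun n =>
    (A n).sum_diag_sq_le_trace_mul_transpose.trans_eq (hA n)
  refine ⟨⟨2, fun n k => ?_⟩, fun k => ?_⟩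
  · have hcenter : ∀ M : Matrix (Fin n) (Fin n) ℝ, ∑ i, A n i i * (M i k ^ 2 - 1 / n)
        = ∑ i, A n i i * M i k ^ 2 - (∑ i, A n i i) / n := fun M => by
      rw [Finset.sum_div, ← Finset.sum_sub_distrib]
      exact Finset.sum_congr rfl fun i _ => by ring
    simp only [hcenter]
    simpa using (hμ n).integral_sum_mul_sq_sub_sq_le k (hdiag n) ((∑ i, A n i i) / n)
  · refine squeeze_zero (fun n => integral_nonneg fun M => sq_nonneg _)
      (fun n => (hμ (n + 1)).integral_sum_mul_sq_sub_sq_le (k n) (hdiag (n + 1)) s) ?_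
    have h1 : Filter.Tendsto (fun n : ℕ => 2 / ((n + 1 : ℕ) : ℝ)) Filter.atTop (nhds 0) :=
      (Filter.tendsto_add_atTop_iff_nat 1).2 (tendsto_const_div_atTop_nhds_zero_nat 2)
    have h2 := (Filter.tendsto_add_atTop_iff_nat 1).2 hs
    simpa using h1.add ((h2.sub_const s).pow 2)
end
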